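/- arXiv:2010.10114 — 4 statements merged into one kernel-verified Lean document; each statement's English description precedes it below -/
import Mathlib

section
/- In the braid group Br₃, the kernel of the homomorphism ρ : Br₃ → Sym₃ equals the normal closure of the set {a², b²}: ker ρ is the smallest normal subgroup of Br₃ containing a² and b². Equivalently, the quotient of Br₃ by the normal subgroup generated by a² and b² is isomorphic to the symmetric group Sym₃ via the map induced by ρ. -/
/-!
Both `a²` and `b²` lie in `ker ρ`, so `ρ` factors through `Q = Br₃ ⧸ ⟨⟨a², b²⟩⟩`. In `Q` the
images `x, y` of `a, b` are involutions satisfying `xyx = yxy`, so left multiplication by `x` or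
`y` permutes the six words `1, x, y, xy, yx, xyx`; as `x, y` generate `Q`, it has at most six
elements. The induced map `Q → Sym₃` is onto a group of order `6`, hence an isomorphism.
-/

/-- The single braid relation `a·b·a·(b·a·b)⁻¹` on two generators. -/
def braidRels : Set (FreeGroup (Fin 2)) :=
  {FreeGroup.of 0 * FreeGroup.of 1 * FreeGroup.of 0 *
    (FreeGroup.of 1 * FreeGroup.of 0 * FreeGroup.of 1)⁻¹}

/-- The braid group on three strings, `Br₃ = ⟨a, b | a·b·a = b·a·b⟩`. -/
abbrev Br3 : Type := PresentedGroup braidRels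

/-- The first generator `a` of `Br₃`. -/
def braidA : Br3 := PresentedGroup.of 0

/-- The second generator `b` of `Br₃`. -/
def braidB : Br3 := PresentedGroup.of 1

/-- The images `σ = (swap 0 1, swap 1 2)` of the generators in `Sym₃`. -/
def braidSigma : Fin 2 → Equiv.Perm (Fin 3) := ![Equiv.swap 0 1, Equiv.swap 1 2]

theorem braidRels_hold : ∀ r ∈ braidRels, FreeGroup.lift braidSigma r = 1 := by
  intro r hr
  rw [braidRels, Set.mem_singleton_iff] at hr
  subst hr
  simp only [map_mul, map_inv, FreeGroup.lift_apply_of, braidSigma, Matrix.cons_val_zero,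
    Matrix.cons_val_one, Matrix.head_cons]
  decide

/-- The natural homomorphism `ρ : Br₃ → Sym₃` sending `a ↦ (0 1)` and `b ↦ (1 2)`. -/
def braidRho : Br3 →* Equiv.Perm (Fin 3) := PresentedGroup.toGroup braidRels_hold

section BraidInvolutions

variable {G : Type*} [Group G] {x y : G}

theorem coe_closure_pair_subset_range_of_braid (hx : x * x = 1) (hy : y * y = 1)
    (hxy : x * y * x = y * x * y) :
    (Subgroup.closure {x, y} : Set G) ⊆ Set.range ![1, x, y, x * y, y * x, x * y * x] := by
  have hxx (g : G) : x * (x * g) = g := by rw [← mul_assoc, hx, one_mul]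
  have hyy (g : G) : y * (y * g) = g := by rw [← mul_assoc, hy, one_mul]
  have hxy' : x * (y * x) = y * (x * y) := by simpa only [mul_assoc] using hxy
  have mul_left_mem : ∀ z ∈ ({x, y} : Set G), ∀ i : Fin 6,
      z * ![1, x, y, x * y, y * x, x * y * x] i ∈
        Set.range ![1, x, y, x * y, y * x, x * y * x] := by
    rintro z (rfl | rfl) i <;> fin_cases i
    exacts [⟨1, by simp⟩, ⟨0, by simp [hx]⟩, ⟨3, by simp⟩, ⟨2, by simp [mul_assoc, hxx]⟩,
      ⟨5, by simp [mul_assoc]⟩, ⟨4, by simp [mul_assoc, hxx]⟩,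
      ⟨2, by simp⟩, ⟨4, by simp⟩, ⟨0, by simp [hy]⟩, ⟨5, by simp [mul_assoc, hxy']⟩,
      ⟨1, by simp [mul_assoc, hyy]⟩, ⟨3, by simp [mul_assoc, hxy', hyy]⟩]
  intro g hg
  induction hg using Subgroup.closure_induction_left with
  | one => exact ⟨0, rfl⟩
  | mul_left z hz w _ hw =>
    obtain ⟨i, rfl⟩ := hw
    exact mul_left_mem z hz i
  | inv_mul_cancel z hz w _ hw =>
    obtain ⟨i, rfl⟩ := hw
    rcases hz with rfl | rfl
    · rw [inv_eq_of_mul_eq_one_right hx]; exact mul_left_mem _ (.inl rfl) i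
    · rw [inv_eq_of_mul_eq_one_right hy]; exact mul_left_mem _ (.inr rfl) i

theorem finite_and_card_le_six_of_braid (hx : x * x = 1) (hy : y * y = 1)
    (hxy : x * y * x = y * x * y) (hG : Subgroup.closure {x, y} = ⊤) :
    Finite G ∧ Nat.card G ≤ 6 := by
  have hsurj : Function.Surjective ![1, x, y, x * y, y * x, x * y * x] := fun g =>
    coe_closure_pair_subset_range_of_braid hx hy hxy (by simp [hG])
  exact ⟨.of_surjective _ hsurj, by simpa using Nat.card_le_card_of_surjective _ hsurj⟩

end BraidInvolutions

theorem closure_swap_zero_one_swap_one_two :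
    Subgroup.closure {Equiv.swap 0 1, Equiv.swap 1 2} = (⊤ : Subgroup (Equiv.Perm (Fin 3))) := by
  refine Subgroup.closure_eq_top_of_mclosure_eq_top ?_
  convert Equiv.Perm.mclosure_swap_castSucc_succ 2
  ext
  simp [Fin.exists_fin_two, eq_comm]

theorem braidA_mul_braidB_mul_braidA : braidA * braidB * braidA = braidB * braidA * braidB :=
  PresentedGroup.mk_eq_mk_of_mul_inv_mem rfl

theorem closure_braidA_braidB : Subgroup.closure {braidA, braidB} = ⊤ := by
  rw [← PresentedGroup.closure_range_of]
  congr
  ext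
  simp [Fin.exists_fin_two, braidA, braidB, eq_comm]

theorem braidRho_braidA : braidRho braidA = Equiv.swap 0 1 :=
  PresentedGroup.toGroup.of braidRels_hold

theorem braidRho_braidB : braidRho braidB = Equiv.swap 1 2 :=
  PresentedGroup.toGroup.of braidRels_hold

theorem braidRho_surjective : Function.Surjective braidRho := by
  rw [← MonoidHom.range_eq_top, eq_top_iff, ← closure_swap_zero_one_swap_one_two,
    Subgroup.closure_le]
  rintro _ (rfl | rfl)
  exacts [⟨braidA, braidRho_braidA⟩, ⟨braidB, braidRho_braidB⟩]

theorem normalClosure_sq_le_ker_braidRho :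
    Subgroup.normalClosure {braidA ^ 2, braidB ^ 2} ≤ braidRho.ker := by
  refine Subgroup.normalClosure_le_normal ?_
  rintro _ (rfl | rfl) <;>
    simp [MonoidHom.mem_ker, braidRho_braidA, braidRho_braidB, sq]

theorem finite_and_card_quotient_normalClosure_sq_le_six :
    Finite (Br3 ⧸ Subgroup.normalClosure {braidA ^ 2, braidB ^ 2}) ∧
      Nat.card (Br3 ⧸ Subgroup.normalClosure {braidA ^ 2, braidB ^ 2}) ≤ 6 := by
  set N := Subgroup.normalClosure {braidA ^ 2, braidB ^ 2}
  have mul_self_eq_one {g : Br3} (hg : g ^ 2 ∈ N) : (g : Br3 ⧸ N) * g = 1 := by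
    rw [← QuotientGroup.mk_mul, ← sq, QuotientGroup.eq_one_iff]
    exact hg
  have hgen : Subgroup.closure {(braidA : Br3 ⧸ N), (braidB : Br3 ⧸ N)} = ⊤ := by
    rw [← Set.image_pair, ← QuotientGroup.coe_mk', ← MonoidHom.map_closure, closure_braidA_braidB,
      ← MonoidHom.range_eq_map, QuotientGroup.range_mk']
  exact finite_and_card_le_six_of_braid
    (mul_self_eq_one (Subgroup.subset_normalClosure (.inl rfl)))
    (mul_self_eq_one (Subgroup.subset_normalClosure (.inr rfl)))
    (by simp only [← QuotientGroup.mk_mul, braidA_mul_braidB_mul_braidA]) hgen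

/-- The pure braid group `PBr₃ = ker ρ` is the normal closure of `{a², b²}` in `Br₃`. -/
theorem ker_rho_eq_normalClosure :
    braidRho.ker = Subgroup.normalClosure {braidA ^ 2, braidB ^ 2} := by
  set N := Subgroup.normalClosure {braidA ^ 2, braidB ^ 2}
  have hN : N ≤ braidRho.ker := normalClosure_sq_le_ker_braidRho
  obtain ⟨hfin, hcard⟩ := finite_and_card_quotient_normalClosure_sq_le_six
  let ρ' : Br3 ⧸ N →* Equiv.Perm (Fin 3) := QuotientGroup.lift N braidRho hN
  have hsurj : Function.Surjective ρ' :=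
    QuotientGroup.lift_surjective_of_surjective _ _ braidRho_surjective _
  have hinj : Function.Injective ρ' :=
    (hsurj.bijective_of_nat_card_le
      (hcard.trans (by simp [Fintype.card_perm, Nat.factorial]))).injective
  refine le_antisymm (fun g hg => ?_) hN
  exact (QuotientGroup.eq_one_iff g).mp ((map_eq_one_iff ρ' hinj).mp hg)
end

section
/- The mixed braid group MBr₃ = ρ⁻¹(⟨(0 2)⟩) equals the subgroup of Br₃ generated (as a subgroup, i.e. Subgroup.closure) by the three elements a², b², and a·b·a. -/
/-!
`K = ⟨a², b², aba⟩` lies in `MBr₃`, its generators being sent to `1`, `1` and `(0 2)`.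
By the braid relation `K` also contains `aba⁻¹ = aba·a⁻²` and `bab⁻¹ = bab·b⁻²`, so right
multiplication by `a` and by `b` permutes the right cosets `K, Ka, Kb` (as the transpositions
`(K Ka)` and `(K Kb)`); hence `Br₃ = K ∪ Ka ∪ Kb`. Every element of `⟨(0 2)⟩` fixes `1` while
`ρ a` and `ρ b` do not, so `Ka` and `Kb` are disjoint from `MBr₃`.
-/

theorem Subgroup.exists_mul_inv_mem_of_perm {G ι κ : Type*} [Group G] (s : κ → G)
    (H : Subgroup G) (t : ι → G) (i₀ : ι) (ht₀ : t i₀ = 1) (σ : κ → Equiv.Perm ι)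
    (hσ : ∀ k i, t i * s k * (t (σ k i))⁻¹ ∈ H) {g : G} (hg : g ∈ closure (Set.range s)) :
    ∃ i, g * (t i)⁻¹ ∈ H := by
  induction hg using Subgroup.closure_induction_right with
  | one => exact ⟨i₀, by simp [ht₀]⟩
  | mul_right x _ _ hy ih =>
    obtain ⟨k, rfl⟩ := hy
    obtain ⟨i, hi⟩ := ih
    refine ⟨σ k i, ?_⟩
    simpa [mul_assoc] using H.mul_mem hi (hσ k i)
  | mul_inv_cancel x _ _ hy ih =>
    obtain ⟨k, rfl⟩ := hy
    obtain ⟨i, hi⟩ := ih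
    refine ⟨(σ k).symm i, ?_⟩
    have h := H.inv_mem (hσ k ((σ k).symm i))
    rw [Equiv.apply_symm_apply] at h
    simpa [mul_assoc] using H.mul_mem hi h

theorem closure_range_braidA_braidB : Subgroup.closure (Set.range ![braidA, braidB]) = ⊤ := by
  convert PresentedGroup.closure_range_of braidRels
  ext i
  fin_cases i <;> rfl

theorem Equiv.Perm.apply_eq_self_of_mem_closure_singleton {α : Type*} {σ τ : Equiv.Perm α}
    {x : α} (hσ : σ x = x) (hτ : τ ∈ Subgroup.closure {σ}) : τ x = x := by
  have hle : Subgroup.closure {σ} ≤ MulAction.stabilizer (Equiv.Perm α) x := by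
    rwa [Subgroup.closure_le, Set.singleton_subset_iff, SetLike.mem_coe,
      MulAction.mem_stabilizer_iff, Equiv.Perm.smul_def]
  exact hle hτ

theorem closure_mixed_le_comap_braidRho :
    Subgroup.closure {braidA ^ 2, braidB ^ 2, braidA * braidB * braidA} ≤
      Subgroup.comap braidRho (Subgroup.closure {Equiv.swap (0 : Fin 3) 2}) := by
  rw [Subgroup.closure_le]
  rintro x (rfl | rfl | rfl) <;>
    simp only [SetLike.mem_coe, Subgroup.mem_comap, map_mul, braidRho_braidA,
      braidRho_braidB, Equiv.swap_mul_self, sq]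
  · exact one_mem _
  · exact one_mem _
  · rw [show Equiv.swap (0 : Fin 3) 1 * Equiv.swap 1 2 * Equiv.swap 0 1 = Equiv.swap 0 2 by decide]
    exact Subgroup.subset_closure rfl

theorem exists_mul_inv_mem_closure_mixed (g : Br3) : ∃ i : Fin 3,
    g * (![1, braidA, braidB] i)⁻¹ ∈
      Subgroup.closure {braidA ^ 2, braidB ^ 2, braidA * braidB * braidA} := by
  set K := Subgroup.closure {braidA ^ 2, braidB ^ 2, braidA * braidB * braidA}
  have ha : braidA ^ 2 ∈ K := Subgroup.subset_closure (by simp)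
  have hb : braidB ^ 2 ∈ K := Subgroup.subset_closure (by simp)
  have haba : braidA * braidB * braidA ∈ K := Subgroup.subset_closure (by simp)
  have hbab : braidB * braidA * braidB ∈ K := braidA_mul_braidB_mul_braidA ▸ haba
  refine K.exists_mul_inv_mem_of_perm ![braidA, braidB] _ 0 rfl
    ![Equiv.swap 0 1, Equiv.swap 0 2] ?_ (closure_range_braidA_braidB ▸ Subgroup.mem_top g)
  intro k i
  fin_cases k <;> fin_cases i <;>
    simp only [Fin.isValue, Fin.zero_eta, Fin.mk_one, Fin.reduceFinMk, Matrix.cons_val,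
      Matrix.cons_val_zero, Matrix.cons_val_one, Matrix.cons_val_fin_one, Equiv.swap_apply_left,
      Equiv.swap_apply_right, Equiv.swap_apply_of_ne_of_ne, ne_eq, Fin.reduceEq, one_ne_zero,
      not_false_eq_true, one_mul, mul_one, inv_one, mul_inv_cancel, one_mem, ← sq]
  · exact ha
  · convert K.mul_mem hbab (K.inv_mem hb) using 1
    group
  · convert K.mul_mem haba (K.inv_mem ha) using 1
    group
  · exact hb

/-- The mixed braid group `MBr₃ = ρ⁻¹(⟨(0 2)⟩)` equals the subgroup of `Br₃` generated
by the three elements `a²`, `b²` and `a·b·a`. -/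
theorem comap_rho_eq_closure_mixed :
    Subgroup.comap braidRho (Subgroup.closure {Equiv.swap (0 : Fin 3) 2}) =
      Subgroup.closure {braidA ^ 2, braidB ^ 2, braidA * braidB * braidA} := by
  refine le_antisymm (fun g hg => ?_) closure_mixed_le_comap_braidRho
  obtain ⟨i, hi⟩ := exists_mul_inv_mem_closure_mixed g
  have hρt := (Subgroup.mul_mem_cancel_left _ hg).1 (closure_mixed_le_comap_braidRho hi)
  rw [inv_mem_iff, Subgroup.mem_comap] at hρt
  have hfix := Equiv.Perm.apply_eq_self_of_mem_closure_singleton (x := 1) (by decide) hρt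
  fin_cases i
  · simpa using hi
  · simp [braidRho_braidA] at hfix
  · simp [braidRho_braidB] at hfix
end

section
/- Let K be an algebraically closed field and k ≥ 1. Suppose M = (V₁, V₂, α, β) and N = (W₁, W₂, γ, δ) are finite-dimensional Λ_con-modules such that the only morphism of representations M → N is zero. Then M or N is filtered by a unique simple module; explicitly, at least one of the following holds: V₁ = 0, or V₂ = 0, or W₁ = 0, or W₂ = 0. -/
/-!
Every nonzero morphism `M → N` below factors as a pair of rank-one maps through a
representation `(K, K, a, b)`. As `αβ` and `βα` are nilpotent, `M` maps nontrivially to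
`(K, K, 1, 0)` when `V₂ ≠ 0` and to `(K, K, 0, 1)` when `V₁ ≠ 0`, and `N` receives a morphism
from `(K, K, 1, 0)` that is nonzero on the second vertex as soon as `γ` is injective and
`W₁ ≠ 0` (dually for `δ`). If neither `γ` nor `δ` is injective, both `S₁` and `S₂` embed in
`N`, while one of them is a quotient of `M`, since `β` and `α` cannot both be surjective.
-/

/-- A finite-dimensional module over the contraction algebra `Λ_con` (the path algebra of
the two-cycle quiver with arrows `a : 1 → 2`, `b : 2 → 1` modulo `(ab)^k a = 0` and
`b (ab)^k = 0`), given concretely as a representation `(V₁, V₂, α, β)` with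
`α ∘ (β ∘ α)^k = 0` and `(β ∘ α)^k ∘ β = 0`. -/
structure LamRep (K : Type) [Field K] (k : ℕ) : Type 1 where
  V1 : Type
  V2 : Type
  [acg1 : AddCommGroup V1]
  [acg2 : AddCommGroup V2]
  [mod1 : Module K V1]
  [mod2 : Module K V2]
  [fd1 : FiniteDimensional K V1]
  [fd2 : FiniteDimensional K V2]
  α : V1 →ₗ[K] V2
  β : V2 →ₗ[K] V1
  rel1 : α ∘ₗ ((β ∘ₗ α) ^ k) = 0
  rel2 : ((β ∘ₗ α) ^ k) ∘ₗ β = 0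

attribute [instance] LamRep.acg1 LamRep.acg2 LamRep.mod1 LamRep.mod2 LamRep.fd1 LamRep.fd2

namespace LamRep

variable {K : Type} [Field K] {k : ℕ}

/-- A morphism of `Λ_con`-modules is a pair of linear maps commuting with the structure
maps. -/
def IsHom (M N : LamRep K k) (φ1 : M.V1 →ₗ[K] N.V1) (φ2 : M.V2 →ₗ[K] N.V2) : Prop :=
  φ2 ∘ₗ M.α = N.α ∘ₗ φ1 ∧ φ1 ∘ₗ M.β = N.β ∘ₗ φ2

/-- An isomorphism of `Λ_con`-modules is a pair of linear isomorphisms commuting with the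
structure maps. -/
def Iso (M N : LamRep K k) : Prop :=
  ∃ (φ1 : M.V1 ≃ₗ[K] N.V1) (φ2 : M.V2 ≃ₗ[K] N.V2),
    M.IsHom N (φ1 : M.V1 →ₗ[K] N.V1) (φ2 : M.V2 →ₗ[K] N.V2)

/-- The zero representation: both underlying vector spaces are trivial. -/
def IsZero (M : LamRep K k) : Prop := Subsingleton M.V1 ∧ Subsingleton M.V2

theorem prodMap_pow {V W : Type} [AddCommGroup V] [Module K V] [AddCommGroup W] [Module K W]
    (f : V →ₗ[K] V) (g : W →ₗ[K] W) (n : ℕ) :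
    (f.prodMap g) ^ n = (f ^ n).prodMap (g ^ n) := by
  induction n with
  | zero => ext <;> simp
  | succ n ih => rw [pow_succ, pow_succ, pow_succ, ih, LinearMap.prodMap_mul]

/-- The direct sum of two representations, taken componentwise. -/
def dsum (M N : LamRep K k) : LamRep K k where
  V1 := M.V1 × N.V1
  V2 := M.V2 × N.V2
  α := M.α.prodMap N.α
  β := M.β.prodMap N.β
  rel1 := by
    have h : (M.β.prodMap N.β) ∘ₗ (M.α.prodMap N.α) = (M.β ∘ₗ M.α).prodMap (N.β ∘ₗ N.α) :=
      LinearMap.prodMap_comp _ _ _ _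
    rw [h, prodMap_pow,
      show (M.α.prodMap N.α) ∘ₗ (((M.β ∘ₗ M.α) ^ k).prodMap ((N.β ∘ₗ N.α) ^ k)) =
        (M.α ∘ₗ ((M.β ∘ₗ M.α) ^ k)).prodMap (N.α ∘ₗ ((N.β ∘ₗ N.α) ^ k)) from
        LinearMap.prodMap_comp _ _ _ _, M.rel1, N.rel1, LinearMap.prodMap_zero]
  rel2 := by
    have h : (M.β.prodMap N.β) ∘ₗ (M.α.prodMap N.α) = (M.β ∘ₗ M.α).prodMap (N.β ∘ₗ N.α) :=
      LinearMap.prodMap_comp _ _ _ _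
    rw [h, prodMap_pow,
      show (((M.β ∘ₗ M.α) ^ k).prodMap ((N.β ∘ₗ N.α) ^ k)) ∘ₗ (M.β.prodMap N.β) =
        (((M.β ∘ₗ M.α) ^ k) ∘ₗ M.β).prodMap (((N.β ∘ₗ N.α) ^ k) ∘ₗ N.β) from
        LinearMap.prodMap_comp _ _ _ _, M.rel2, N.rel2, LinearMap.prodMap_zero]

/-- A representation is indecomposable if it is nonzero and not isomorphic to a direct sum
of two nonzero representations. -/
def Indecomposable (M : LamRep K k) : Prop :=
  ¬ M.IsZero ∧ ∀ N P : LamRep K k, M.Iso (N.dsum P) → N.IsZero ∨ P.IsZero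

/-- The endomorphism space of a representation, as a `K`-subspace of the product of the two
spaces of linear endomorphisms. -/
def endSpace (M : LamRep K k) :
    Submodule K ((M.V1 →ₗ[K] M.V1) × (M.V2 →ₗ[K] M.V2)) where
  carrier := {φ | M.IsHom M φ.1 φ.2}
  zero_mem' := by
    constructor <;> simp [LinearMap.zero_comp, LinearMap.comp_zero]
  add_mem' := by
    rintro φ ψ ⟨h1, h2⟩ ⟨h3, h4⟩
    constructor
    · simp only [Prod.fst_add, Prod.snd_add, LinearMap.add_comp, LinearMap.comp_add, h1, h3]
    · simp only [Prod.fst_add, Prod.snd_add, LinearMap.add_comp, LinearMap.comp_add, h2, h4]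
  smul_mem' := by
    rintro c φ ⟨h1, h2⟩
    constructor
    · simp only [Prod.smul_fst, Prod.smul_snd, LinearMap.smul_comp, LinearMap.comp_smul, h1]
    · simp only [Prod.smul_fst, Prod.smul_snd, LinearMap.smul_comp, LinearMap.comp_smul, h2]


variable (K)

/-- The simple module `S₁ = (K, 0, 0, 0)`. -/
def S1 : LamRep K k where
  V1 := K
  V2 := PUnit
  α := 0
  β := 0
  rel1 := by rw [LinearMap.zero_comp]
  rel2 := by rw [LinearMap.comp_zero]

/-- The simple module `S₂ = (0, K, 0, 0)`. -/
def S2 : LamRep K k where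
  V1 := PUnit
  V2 := K
  α := 0
  β := 0
  rel1 := by rw [LinearMap.zero_comp]
  rel2 := by rw [LinearMap.comp_zero]

/-- The module `M₁ = (K, K, id, 0)` (a representation whenever `k ≥ 1`). -/
def M1 (hk : 1 ≤ k) : LamRep K k where
  V1 := K
  V2 := K
  α := LinearMap.id
  β := 0
  rel1 := by
    rw [LinearMap.zero_comp, zero_pow (Nat.one_le_iff_ne_zero.mp hk), LinearMap.comp_zero]
  rel2 := by rw [LinearMap.comp_zero]

/-- The module `M₂ = (K, K, 0, id)` (a representation whenever `k ≥ 1`). -/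
def M2 (hk : 1 ≤ k) : LamRep K k where
  V1 := K
  V2 := K
  α := 0
  β := LinearMap.id
  rel1 := by rw [LinearMap.zero_comp]
  rel2 := by
    rw [LinearMap.comp_zero, zero_pow (Nat.one_le_iff_ne_zero.mp hk), LinearMap.zero_comp]

/-- The projective module `Q₁ = (K², K, α(s,t) = s, β(t) = (0,t))` for `k = 1`. -/
def Q1 : LamRep K 1 where
  V1 := K × K
  V2 := K
  α := LinearMap.fst K K K
  β := LinearMap.inr K K K
  rel1 := by ext <;> simp
  rel2 := by ext <;> simp

/-- The projective module `Q₂ = (K, K², α(t) = (0,t), β(s,t) = s)` for `k = 1`. -/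
def Q2 : LamRep K 1 where
  V1 := K
  V2 := K × K
  α := LinearMap.inr K K K
  β := LinearMap.fst K K K
  rel1 := by ext <;> simp
  rel2 := by ext <;> simp

end LamRep

section LinearAlgebra

open Function

variable {K V W : Type} [Field K] [AddCommGroup V] [Module K V] [AddCommGroup W] [Module K W]

theorem LinearMap.exists_dual_ne_zero_comp_eq_zero {f : V →ₗ[K] W} (hf : ¬ Surjective f) :
    ∃ g : Module.Dual K W, g ≠ 0 ∧ g ∘ₗ f = 0 := by
  rw [← LinearMap.dualMap_injective_iff, injective_iff_map_eq_zero] at hf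
  push Not at hf
  obtain ⟨g, hg, hne⟩ := hf
  exact ⟨g, hne, hg⟩

theorem LinearMap.exists_ne_zero_apply_eq_zero {f : V →ₗ[K] W} (hf : ¬ Injective f) :
    ∃ v, v ≠ 0 ∧ f v = 0 := by
  rw [injective_iff_map_eq_zero] at hf
  push Not at hf
  obtain ⟨v, hv, hne⟩ := hf
  exact ⟨v, hne, hv⟩

theorem LinearMap.smulRight_ne_zero {f : Module.Dual K V} {w : W} (hf : f ≠ 0) (hw : w ≠ 0) :
    f.smulRight w ≠ 0 := by
  obtain ⟨v, hv⟩ := DFunLike.ne_iff.mp hf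
  exact DFunLike.ne_iff.mpr ⟨v, smul_ne_zero hv hw⟩

theorem LinearMap.comp_pow_succ (f : V →ₗ[K] W) (g : W →ₗ[K] V) (n : ℕ) :
    (f ∘ₗ g) ^ (n + 1) = f ∘ₗ ((g ∘ₗ f) ^ n) ∘ₗ g := by
  induction n with
  | zero => rfl
  | succ n ih =>
    rw [pow_succ, ih, pow_succ, Module.End.mul_eq_comp, Module.End.mul_eq_comp]
    simp only [LinearMap.comp_assoc]

variable [FiniteDimensional K V] [Nontrivial V] {f : Module.End K V}

theorem IsNilpotent.not_surjective (hf : IsNilpotent f) : ¬ Surjective f := fun hs =>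
  hf.not_isUnit ((Module.End.isUnit_iff f).2 ⟨LinearMap.injective_iff_surjective.2 hs, hs⟩)

theorem IsNilpotent.not_injective (hf : IsNilpotent f) : ¬ Injective f := fun hi =>
  hf.not_surjective (LinearMap.injective_iff_surjective.1 hi)

end LinearAlgebra

namespace LamRep

open Function

variable {K : Type} [Field K] {k : ℕ}

theorem isNilpotent_beta_comp_alpha (M : LamRep K k) : IsNilpotent (M.β ∘ₗ M.α) :=
  ⟨k + 1, by rw [pow_succ, Module.End.mul_eq_comp, ← LinearMap.comp_assoc, M.rel2,
    LinearMap.zero_comp]⟩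

theorem isNilpotent_alpha_comp_beta (M : LamRep K k) : IsNilpotent (M.α ∘ₗ M.β) :=
  ⟨k + 1, by rw [LinearMap.comp_pow_succ, ← LinearMap.comp_assoc, M.rel1, LinearMap.zero_comp]⟩

/-- `(f1, f2)` is a morphism from `M` to the representation `(K, K, a, b)` and `(w1, w2)` one
from `(K, K, a, b)` to `N`; the composite is the pair of rank-one maps. -/
theorem isHom_smulRight {M N : LamRep K k} (a b : K) {f1 : Module.Dual K M.V1}
    {f2 : Module.Dual K M.V2} {w1 : N.V1} {w2 : N.V2} (hα : f2 ∘ₗ M.α = a • f1)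
    (hβ : f1 ∘ₗ M.β = b • f2) (hγ : N.α w1 = a • w2) (hδ : N.β w2 = b • w1) :
    M.IsHom N (f1.smulRight w1) (f2.smulRight w2) := by
  constructor <;> ext v
  · have hv : f2 (M.α v) = a * f1 v := DFunLike.congr_fun hα v
    simp only [LinearMap.comp_apply, LinearMap.smulRight_apply, map_smul, hγ, smul_smul, hv,
      mul_comm]
  · have hv : f1 (M.β v) = b * f2 v := DFunLike.congr_fun hβ v
    simp only [LinearMap.comp_apply, LinearMap.smulRight_apply, map_smul, hδ, smul_smul, hv,
      mul_comm]

variable (M N : LamRep K k)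

theorem exists_isHom_ne_zero_of_injective_alpha [Nontrivial M.V2] [Nontrivial N.V1]
    (hN : Injective N.α) : ∃ φ1 φ2, M.IsHom N φ1 φ2 ∧ (φ1 ≠ 0 ∨ φ2 ≠ 0) := by
  obtain ⟨f, hf0, hf⟩ := LinearMap.exists_dual_ne_zero_comp_eq_zero
    M.isNilpotent_alpha_comp_beta.not_surjective
  obtain ⟨w, hw0, hw⟩ := LinearMap.exists_ne_zero_apply_eq_zero
    N.isNilpotent_beta_comp_alpha.not_injective
  have hφ := isHom_smulRight (f1 := f ∘ₗ M.α) (f2 := f) (w1 := w) (w2 := N.α w) 1 0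
    (one_smul _ _).symm (by rw [LinearMap.comp_assoc, hf, zero_smul]) (one_smul _ _).symm
    (by rw [zero_smul]; exact hw)
  exact ⟨_, _, hφ, Or.inr (LinearMap.smulRight_ne_zero hf0 ((map_ne_zero_iff _ hN).2 hw0))⟩

theorem exists_isHom_ne_zero_of_injective_beta [Nontrivial M.V1] [Nontrivial N.V2]
    (hN : Injective N.β) : ∃ φ1 φ2, M.IsHom N φ1 φ2 ∧ (φ1 ≠ 0 ∨ φ2 ≠ 0) := by
  obtain ⟨f, hf0, hf⟩ := LinearMap.exists_dual_ne_zero_comp_eq_zero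
    M.isNilpotent_beta_comp_alpha.not_surjective
  obtain ⟨w, hw0, hw⟩ := LinearMap.exists_ne_zero_apply_eq_zero
    N.isNilpotent_alpha_comp_beta.not_injective
  have hφ := isHom_smulRight (f1 := f) (f2 := f ∘ₗ M.β) (w1 := N.β w) (w2 := w) 0 1
    (by rw [LinearMap.comp_assoc, hf, zero_smul]) (one_smul _ _).symm
    (by rw [zero_smul]; exact hw) (one_smul _ _).symm
  exact ⟨_, _, hφ, Or.inl (LinearMap.smulRight_ne_zero hf0 ((map_ne_zero_iff _ hN).2 hw0))⟩

theorem exists_isHom_ne_zero_of_not_injective [Nontrivial M.V1] (hNα : ¬ Injective N.α)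
    (hNβ : ¬ Injective N.β) : ∃ φ1 φ2, M.IsHom N φ1 φ2 ∧ (φ1 ≠ 0 ∨ φ2 ≠ 0) := by
  obtain ⟨w1, hw10, hw1⟩ := LinearMap.exists_ne_zero_apply_eq_zero hNα
  obtain ⟨w2, hw20, hw2⟩ := LinearMap.exists_ne_zero_apply_eq_zero hNβ
  by_cases hMβ : Surjective M.β
  · have hMα : ¬ Surjective M.α := fun hMα =>
      M.isNilpotent_beta_comp_alpha.not_surjective (hMβ.comp hMα)
    obtain ⟨g, hg0, hg⟩ := LinearMap.exists_dual_ne_zero_comp_eq_zero hMα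
    have hφ := isHom_smulRight (f1 := 0) (f2 := g) (w1 := 0) (w2 := w2) 0 0
      (by simp [hg]) (by simp) (by simp) (by simp [hw2])
    exact ⟨_, _, hφ, Or.inr (LinearMap.smulRight_ne_zero hg0 hw20)⟩
  · obtain ⟨g, hg0, hg⟩ := LinearMap.exists_dual_ne_zero_comp_eq_zero hMβ
    have hφ := isHom_smulRight (f1 := g) (f2 := 0) (w1 := w1) (w2 := 0) 0 0
      (by simp) (by simp [hg]) (by simp [hw1]) (by simp)
    exact ⟨_, _, hφ, Or.inl (LinearMap.smulRight_ne_zero hg0 hw10)⟩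

theorem exists_isHom_ne_zero [Nontrivial M.V1] [Nontrivial M.V2] [Nontrivial N.V1]
    [Nontrivial N.V2] : ∃ φ1 φ2, M.IsHom N φ1 φ2 ∧ (φ1 ≠ 0 ∨ φ2 ≠ 0) := by
  by_cases hNα : Injective N.α
  · exact M.exists_isHom_ne_zero_of_injective_alpha N hNα
  by_cases hNβ : Injective N.β
  · exact M.exists_isHom_ne_zero_of_injective_beta N hNβ
  exact M.exists_isHom_ne_zero_of_not_injective N hNα hNβ

end LamRep

theorem orthogonal_lam_modules_general (K : Type) [Field K] (k : ℕ)
    (M N : LamRep K k)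
    (h : ∀ (φ1 : M.V1 →ₗ[K] N.V1) (φ2 : M.V2 →ₗ[K] N.V2),
        M.IsHom N φ1 φ2 → φ1 = 0 ∧ φ2 = 0) :
    Subsingleton M.V1 ∨ Subsingleton M.V2 ∨ Subsingleton N.V1 ∨ Subsingleton N.V2 := by
  by_contra! hne
  obtain ⟨_, _, _, _⟩ := hne
  obtain ⟨φ1, φ2, hφ, hne⟩ := M.exists_isHom_ne_zero N
  exact not_and_or.2 hne (h φ1 φ2 hφ)

/-- If the only morphism between two finite-dimensional `Λ_con`-modules
`M = (V₁, V₂, α, β)` and `N = (W₁, W₂, γ, δ)` is zero, then one of the two modules is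
filtered by a unique simple module, i.e. at least one of `V₁`, `V₂`, `W₁`, `W₂` is the
zero vector space. -/
theorem orthogonal_lam_modules (K : Type) [Field K] [IsAlgClosed K] (k : ℕ) (hk : 1 ≤ k)
    (M N : LamRep K k)
    (h : ∀ (φ1 : M.V1 →ₗ[K] N.V1) (φ2 : M.V2 →ₗ[K] N.V2),
        M.IsHom N φ1 φ2 → φ1 = 0 ∧ φ2 = 0) :
    Subsingleton M.V1 ∨ Subsingleton M.V2 ∨ Subsingleton N.V1 ∨ Subsingleton N.V2 :=
  orthogonal_lam_modules_general K k M N h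
end

section
/- Let K be an algebraically closed field and k ≥ 1. If X = (V₁, V₂, α, β) is a finite-dimensional Λ_con-module whose endomorphism space (the K-vector space of morphisms X → X) is one-dimensional, then X is isomorphic as a representation to exactly one of the four modules S₁ = (K, 0, 0, 0), S₂ = (0, K, 0, 0), M₁ = (K, K, id, 0), M₂ = (K, K, 0, id). In particular Λ_con has exactly four bricks. -/
/-!
Suppose every endomorphism of `X` is scalar. By the relations the endomorphism `(βα, αβ)` is
nilpotent, so this scalar is zero: `βα = 0` and `αβ = 0`. If `V₂ ≠ 0`, a rank-one map
`V₁ → V₁` with image in `ker α` that kills `range β` is an endomorphism with zero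
`V₂`-component, hence zero: so `α` is injective or `β` is surjective, and symmetrically `β` is
injective or `α` is surjective. Together with `βα = αβ = 0` this makes one arrow bijective and
the other zero (or one of the spaces zero), and then `End X ≅ End V₁` (or `End V₂`) forces
dimension one. The four modules are told apart by their dimension vectors and by whether `α`
vanishes.
-/

open Module LinearMap

theorem Module.finrank_eq_one_of_forall_exists_eq_smul_one {K V : Type*} [Field K]
    [AddCommGroup V] [Module K V] [Nontrivial V]
    (h : ∀ f : Module.End K V, ∃ c : K, f = c • 1) : finrank K V = 1 := by
  obtain ⟨v, hv⟩ := exists_ne (0 : V)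
  obtain ⟨g, hg⟩ := Projective.exists_dual_eq_one K hv
  refine (finrank_eq_one_iff_of_nonzero' v hv).2 fun w => ?_
  obtain ⟨c, hc⟩ := h (g.smulRight w)
  exact ⟨c, by simpa [hg] using (LinearMap.congr_fun hc v).symm⟩

namespace LamRep

variable {K : Type} [Field K] {k : ℕ}

def ScalarEnds (M : LamRep K k) : Prop :=
  ∀ φ1 φ2, M.IsHom M φ1 φ2 → ∃ c : K, φ1 = c • 1 ∧ φ2 = c • 1

/-- Exchanging the two vertices maps `S1` to `S2` and `M1` to `M2` definitionally. -/
abbrev swap (M : LamRep K k) : LamRep K k where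
  V1 := M.V2
  V2 := M.V1
  α := M.β
  β := M.α
  rel1 := by
    rw [← Module.End.commute_pow_left_of_commute (comp_assoc M.β M.α M.β), M.rel2]
  rel2 := by
    rw [Module.End.commute_pow_left_of_commute (comp_assoc M.α M.β M.α), M.rel1]

theorem Iso.swap {M N : LamRep K k} : M.Iso N → M.swap.Iso N.swap
  | ⟨φ1, φ2, h⟩ => ⟨φ2, φ1, h.symm⟩

theorem ScalarEnds.swap {M : LamRep K k} (hM : M.ScalarEnds) : M.swap.ScalarEnds :=
  fun φ1 φ2 hφ => (hM φ2 φ1 hφ.symm).imp fun _ => And.symm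

theorem one_mem_endSpace (M : LamRep K k) : (1, 1) ∈ M.endSpace := ⟨rfl, rfl⟩

theorem nontrivial_of_finrank_endSpace_eq_one (M : LamRep K k)
    (h : finrank K M.endSpace = 1) : Nontrivial M.V1 ∨ Nontrivial M.V2 := by
  by_contra! hM
  obtain ⟨_, _⟩ := hM
  simp [finrank_zero_of_subsingleton] at h

theorem scalarEnds_of_finrank_endSpace_eq_one (M : LamRep K k)
    (h : finrank K M.endSpace = 1) : M.ScalarEnds := by
  intro φ1 φ2 hφ
  have hone : (⟨(1, 1), M.one_mem_endSpace⟩ : M.endSpace) ≠ 0 := by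
    rcases M.nontrivial_of_finrank_endSpace_eq_one h with _ | _ <;> simp [Subtype.ext_iff]
  obtain ⟨c, hc⟩ := (finrank_eq_one_iff_of_nonzero' _ hone).1 h ⟨(φ1, φ2), hφ⟩
  simp only [Subtype.ext_iff, Prod.ext_iff] at hc
  exact ⟨c, hc.1.symm, hc.2.symm⟩

def brick (K : Type) [Field K] {k : ℕ} (hk : 1 ≤ k) : Fin 4 → LamRep K k :=
  ![S1 K, S2 K, M1 K hk, M2 K hk]

variable {M : LamRep K k}

theorem ScalarEnds.comp_eq_zero (hM : M.ScalarEnds) [Nontrivial M.V1] :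
    M.β ∘ₗ M.α = 0 ∧ M.α ∘ₗ M.β = 0 := by
  obtain ⟨c, h1, h2⟩ := hM (M.β ∘ₗ M.α) (M.α ∘ₗ M.β) ⟨rfl, rfl⟩
  have hnil : (M.β ∘ₗ M.α) ^ (k + 1) = 0 := by
    rw [pow_succ', Module.End.mul_eq_comp, comp_assoc, M.rel1, comp_zero]
  rw [h1, smul_pow, one_pow, smul_eq_zero, pow_eq_zero_iff k.succ_ne_zero] at hnil
  have hc : c = 0 := hnil.resolve_right one_ne_zero
  simp [h1, h2, hc]

theorem ScalarEnds.ker_α_eq_bot_or_range_β_eq_top (hM : M.ScalarEnds) [Nontrivial M.V2] :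
    ker M.α = ⊥ ∨ range M.β = ⊤ := by
  by_contra! ⟨hker, hrange⟩
  obtain ⟨x, hx, hx0⟩ := (Submodule.ne_bot_iff _).1 hker
  obtain ⟨f, hf0, hf⟩ := Submodule.exists_dual_map_eq_bot_of_lt_top hrange.lt_top inferInstance
  have hfβ : f ∘ₗ M.β = 0 := by rwa [← range_eq_bot, range_comp]
  obtain ⟨c, h1, h2⟩ := hM (f.smulRight x) 0
    ⟨by ext v; simp [mem_ker.1 hx], by ext y; simp [← comp_apply, hfβ]⟩
  have hc : c = 0 := by simpa using h2.symm
  rw [hc, zero_smul, smulRight_apply_eq_zero_iff] at h1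
  exact h1.elim hf0 hx0

theorem ScalarEnds.iso_S1 (hM : M.ScalarEnds) [Nontrivial M.V1] [Subsingleton M.V2] :
    M.Iso (S1 K) := by
  have hdim : finrank K M.V1 = 1 := finrank_eq_one_of_forall_exists_eq_smul_one fun f =>
    (hM f 0 ⟨Subsingleton.elim _ _, Subsingleton.elim _ _⟩).imp fun _ => And.left
  exact ⟨LinearEquiv.ofFinrankEq _ _ (hdim.trans (finrank_self K).symm),
    LinearEquiv.ofSubsingleton _ PUnit, ext fun _ => rfl, by ext y; simp [Subsingleton.elim y 0]⟩

theorem ScalarEnds.iso_M1_of_bijective (hk : 1 ≤ k) (hM : M.ScalarEnds) [Nontrivial M.V1]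
    (hα : Function.Bijective M.α) (hβ : M.β = 0) : M.Iso (M1 K hk) := by
  let eα := LinearEquiv.ofBijective M.α hα
  have hdim : finrank K M.V1 = 1 := finrank_eq_one_of_forall_exists_eq_smul_one fun f =>
    (hM f (M.α ∘ₗ f ∘ₗ eα.symm) ⟨by ext; simp [eα], by simp [hβ]⟩).imp fun _ => And.left
  let e : M.V1 ≃ₗ[K] K := LinearEquiv.ofFinrankEq _ _ (hdim.trans (finrank_self K).symm)
  refine ⟨e, eα.symm.trans e, ext fun x => congrArg e (eα.symm_apply_apply x), ?_⟩
  change e.toLinearMap ∘ₗ M.β = 0 ∘ₗ _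
  simp [hβ]

theorem ScalarEnds.iso_M1_of_ker_α_eq_bot (hk : 1 ≤ k) (hM : M.ScalarEnds) [Nontrivial M.V1]
    [Nontrivial M.V2] (hα : ker M.α = ⊥) : M.Iso (M1 K hk) := by
  have hβ : M.β = 0 := by
    rw [← range_eq_bot, ← le_bot_iff, ← hα, range_le_ker_iff]
    exact hM.comp_eq_zero.2
  have hrange : range M.α = ⊤ :=
    hM.swap.ker_α_eq_bot_or_range_β_eq_top.resolve_left fun h => by
      simp [hβ] at h
  exact hM.iso_M1_of_bijective hk ⟨ker_eq_bot.1 hα, range_eq_top.1 hrange⟩ hβ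

theorem ScalarEnds.iso_M1_or_iso_M2 (hk : 1 ≤ k) (hM : M.ScalarEnds) [Nontrivial M.V1]
    [Nontrivial M.V2] : M.Iso (M1 K hk) ∨ M.Iso (M2 K hk) := by
  refine hM.ker_α_eq_bot_or_range_β_eq_top.imp (hM.iso_M1_of_ker_α_eq_bot hk) fun hβ => ?_
  have hα : M.α = 0 := by
    rw [← ker_eq_top, ← top_le_iff, ← hβ, range_le_ker_iff]
    exact hM.comp_eq_zero.2
  have hker : ker M.β = ⊥ :=
    hM.swap.ker_α_eq_bot_or_range_β_eq_top.resolve_right fun h => by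
      simp [hα] at h
  exact (hM.swap.iso_M1_of_ker_α_eq_bot hk hker).swap

theorem ScalarEnds.exists_iso (hk : 1 ≤ k) (hM : M.ScalarEnds)
    (hM0 : Nontrivial M.V1 ∨ Nontrivial M.V2) :
    ∃ i : Fin 4, M.Iso (brick K hk i) := by
  rcases subsingleton_or_nontrivial M.V1 with h1 | h1 <;>
    rcases subsingleton_or_nontrivial M.V2 with h2 | h2
  · simp [not_nontrivial] at hM0
  · exact ⟨1, hM.swap.iso_S1.swap⟩
  · exact ⟨0, hM.iso_S1⟩
  · exact (hM.iso_M1_or_iso_M2 hk).elim (⟨2, ·⟩) (⟨3, ·⟩)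

noncomputable def dimVector (M : LamRep K k) : ℕ × ℕ := (finrank K M.V1, finrank K M.V2)

theorem Iso.dimVector_eq {N : LamRep K k} : M.Iso N → M.dimVector = N.dimVector
  | ⟨φ1, φ2, _⟩ => Prod.ext φ1.finrank_eq φ2.finrank_eq

theorem Iso.α_eq_zero_iff {N : LamRep K k} : M.Iso N → (M.α = 0 ↔ N.α = 0)
  | ⟨φ1, φ2, hα, _⟩ => by
    constructor <;> intro h <;> ext x
    · simpa [h] using (LinearMap.congr_fun hα (φ1.symm x)).symm
    · simpa [h] using LinearMap.congr_fun hα x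

theorem brick_dimVector (hk : 1 ≤ k) (i : Fin 4) :
    (brick K hk i).dimVector = ![(1, 0), (0, 1), (1, 1), (1, 1)] i := by
  have h0 : finrank K PUnit = 0 := finrank_zero_of_subsingleton
  have h1 : finrank K K = 1 := finrank_self K
  fin_cases i
  exacts [Prod.ext h1 h0, Prod.ext h0 h1, Prod.ext h1 h1, Prod.ext h1 h1]

theorem brick_α_eq_zero_iff (hk : 1 ≤ k) (i : Fin 4) :
    (brick K hk i).α = 0 ↔ i ≠ 2 := by
  fin_cases i
  · exact iff_of_true rfl (by decide)
  · exact iff_of_true rfl (by decide)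
  · exact iff_of_false (fun h : (LinearMap.id : K →ₗ[K] K) = 0 =>
      one_ne_zero (LinearMap.congr_fun h 1)) (by decide)
  · exact iff_of_true rfl (by decide)

theorem eq_of_iso_brick_of_iso_brick (hk : 1 ≤ k) {i j : Fin 4}
    (hi : M.Iso (brick K hk i)) (hj : M.Iso (brick K hk j)) : i = j := by
  have hdim := hi.dimVector_eq.symm.trans hj.dimVector_eq
  have hα := hi.α_eq_zero_iff.symm.trans hj.α_eq_zero_iff
  rw [brick_dimVector, brick_dimVector] at hdim
  rw [brick_α_eq_zero_iff, brick_α_eq_zero_iff] at hα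
  clear hi hj
  fin_cases i <;> fin_cases j <;> simp_all

end LamRep

theorem lam_bricks_general (K : Type) [Field K] (k : ℕ) (hk : 1 ≤ k)
    (X : LamRep K k) (h : Module.finrank K X.endSpace = 1) :
    ∃! i : Fin 4,
      X.Iso (![LamRep.S1 K, LamRep.S2 K, LamRep.M1 K hk, LamRep.M2 K hk] i) := by
  obtain ⟨i, hi⟩ := (X.scalarEnds_of_finrank_endSpace_eq_one h).exists_iso hk
    (X.nontrivial_of_finrank_endSpace_eq_one h)
  exact ⟨i, hi, fun j hj => X.eq_of_iso_brick_of_iso_brick hk hj hi⟩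

/-- If a finite-dimensional `Λ_con`-module `X` has a one-dimensional endomorphism space,
then `X` is isomorphic to exactly one of the four modules `S₁ = (K, 0, 0, 0)`,
`S₂ = (0, K, 0, 0)`, `M₁ = (K, K, id, 0)`, `M₂ = (K, K, 0, id)`.  In particular
`Λ_con` has exactly four bricks. -/
theorem lam_bricks (K : Type) [Field K] [IsAlgClosed K] (k : ℕ) (hk : 1 ≤ k)
    (X : LamRep K k) (h : Module.finrank K X.endSpace = 1) :
    ∃! i : Fin 4,
      X.Iso (![LamRep.S1 K, LamRep.S2 K, LamRep.M1 K hk, LamRep.M2 K hk] i) :=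
  lam_bricks_general K k hk X h
end
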